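/- In a priced game where no improving switches exist for Player 1 with respect to σ = (σ₁, σ₂), and all action costs are nonnegative, if Player 2 deviates to a strategy σ₂' such that the path induced by (σ₁, σ₂') from some state k₀ is infinite (ends in a cycle) while u(k₀, σ) is finite, then a contradiction arises: along the infinite path, the valuations ν(kᵢ, σ) strictly decrease at every step, which is impossible along a cycle. -/

import Mathlib

noncomputable section

open Classical
open scoped ENNReal

namespace PTGpaper

/-- A priced game: finitely many states partitioned between Player 1 (owner `0`,
the minimizer) and Player 2 (owner `1`, the maximizer), actions with nonnegative
(extended real) costs and destinations in the states or the terminal state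
(modeled by `none`). -/
structure PricedGame where
  n : ℕ
  owner : Fin n → Fin 2
  A : Fin n → Finset ℕ
  cost : ℕ → ℝ≥0∞
  dest : ℕ → Option (Fin n)

namespace PricedGame

variable (G : PricedGame)

/-- A positional strategy profile: a choice of an available action in each state. -/
def Valid (σ : Fin G.n → ℕ) : Prop :=
  ∀ k, σ k ∈ G.A k

def step (σ : Fin G.n → ℕ) (o : Option (Fin G.n)) : Option (Fin G.n) :=
  o.bind fun k => G.dest (σ k)

/-- The state reached after `t` steps of the path `P_{k,σ}` (`none` = terminal). -/
def reach (σ : Fin G.n → ℕ) (k : Fin G.n) (t : ℕ) : Option (Fin G.n) :=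
  (G.step σ)^[t] (some k)

/-- The path from `k` under `σ` reaches the terminal state `⊥`. -/
def Terminates (σ : Fin G.n → ℕ) (k : Fin G.n) : Prop :=
  ∃ t, G.reach σ k t = none

/-- Payoff `u(k,σ)`: total cost of the path from `k` to `⊥`, or `∞` if `⊥` is unreached. -/
def payoff (σ : Fin G.n → ℕ) (k : Fin G.n) : ℝ≥0∞ :=
  if G.Terminates σ k then
    ∑' t : ℕ, (G.reach σ k t).elim 0 (fun k' => G.cost (σ k'))
  else ⊤

/-- Length `ℓ(k,σ)` of the path from `k` to `⊥` (`⊤` if `⊥` is unreached). -/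
def len (σ : Fin G.n → ℕ) (k : Fin G.n) : ℕ∞ :=
  ⨅ (t : ℕ) (_ : G.reach σ k t = none), (t : ℕ∞)

def payoffO (σ : Fin G.n → ℕ) (o : Option (Fin G.n)) : ℝ≥0∞ :=
  o.elim 0 (G.payoff σ)

def lenO (σ : Fin G.n → ℕ) (o : Option (Fin G.n)) : ℕ∞ :=
  o.elim 0 (G.len σ)

/-- The valuation `ν(k,σ) = (u(k,σ), ℓ(k,σ))`, ordered lexicographically. -/
def valn (σ : Fin G.n → ℕ) (k : Fin G.n) : ℝ≥0∞ ×ₗ ℕ∞ :=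
  toLex (G.payoff σ k, G.len σ k)

/-- The valuation obtained by first using action `j` and then following `σ`. -/
def cand (σ : Fin G.n → ℕ) (j : ℕ) : ℝ≥0∞ ×ₗ ℕ∞ :=
  toLex (G.cost j + G.payoffO σ (G.dest j), 1 + G.lenO σ (G.dest j))

/-- `j ∈ A k` is an improving switch for Player 1 (the minimizer) at `k` w.r.t. `σ`. -/
def Improving1 (σ : Fin G.n → ℕ) (k : Fin G.n) (j : ℕ) : Prop :=
  j ∈ G.A k ∧ G.cand σ j < G.valn σ k

/-- `j ∈ A k` is an improving switch for Player 2 (the maximizer) at `k` w.r.t. `σ`. -/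
def Improving2 (σ : Fin G.n → ℕ) (k : Fin G.n) (j : ℕ) : Prop :=
  j ∈ G.A k ∧ G.valn σ k < G.cand σ j

/-- Strongly improving switch for Player 1: strictly smaller payoff. -/
def StronglyImproving1 (σ : Fin G.n → ℕ) (k : Fin G.n) (j : ℕ) : Prop :=
  j ∈ G.A k ∧ G.cost j + G.payoffO σ (G.dest j) < G.payoff σ k

/-- Strongly improving switch for Player 2: strictly larger payoff. -/
def StronglyImproving2 (σ : Fin G.n → ℕ) (k : Fin G.n) (j : ℕ) : Prop :=
  j ∈ G.A k ∧ G.payoff σ k < G.cost j + G.payoffO σ (G.dest j)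

/-- Combine a Player 1 strategy and a Player 2 strategy into a profile. -/
def combine (σ₁ σ₂ : Fin G.n → ℕ) (k : Fin G.n) : ℕ :=
  if G.owner k = 0 then σ₁ k else σ₂ k

/-- The upper value `min_{σ₁} max_{σ₂} u(k,σ₁,σ₂)`. -/
def upperVal (k : Fin G.n) : ℝ≥0∞ :=
  ⨅ σ₁ : {σ : Fin G.n → ℕ // G.Valid σ}, ⨆ σ₂ : {σ : Fin G.n → ℕ // G.Valid σ},
    G.payoff (G.combine σ₁ σ₂) k

/-- The lower value `max_{σ₂} min_{σ₁} u(k,σ₁,σ₂)`. -/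
def lowerVal (k : Fin G.n) : ℝ≥0∞ :=
  ⨆ σ₂ : {σ : Fin G.n → ℕ // G.Valid σ}, ⨅ σ₁ : {σ : Fin G.n → ℕ // G.Valid σ},
    G.payoff (G.combine σ₁ σ₂) k

/-- `σ₁` is a best response of Player 1 to `σ₂`: it minimizes the payoff at every state. -/
def BestResponse1 (σ₁ σ₂ : Fin G.n → ℕ) : Prop :=
  G.Valid σ₁ ∧ ∀ σ₁' : Fin G.n → ℕ, G.Valid σ₁' →
    ∀ k, G.payoff (G.combine σ₁ σ₂) k ≤ G.payoff (G.combine σ₁' σ₂) k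

/-- `σ₂` is a best response of Player 2 to `σ₁`: it maximizes the payoff at every state. -/
def BestResponse2 (σ₁ σ₂ : Fin G.n → ℕ) : Prop :=
  G.Valid σ₂ ∧ ∀ σ₂' : Fin G.n → ℕ, G.Valid σ₂' →
    ∀ k, G.payoff (G.combine σ₁ σ₂') k ≤ G.payoff (G.combine σ₁ σ₂) k

/-- `σ₁` is an optimal Player 1 strategy: it attains the upper value at every state. -/
def Optimal1 (σ₁ : Fin G.n → ℕ) : Prop :=
  G.Valid σ₁ ∧ ∀ k,
    (⨆ σ₂ : {σ : Fin G.n → ℕ // G.Valid σ}, G.payoff (G.combine σ₁ σ₂) k) = G.upperVal k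

/-- `σ₂` is an optimal Player 2 strategy: it attains the lower value at every state. -/
def Optimal2 (σ₂ : Fin G.n → ℕ) : Prop :=
  G.Valid σ₂ ∧ ∀ k,
    (⨅ σ₁ : {σ : Fin G.n → ℕ // G.Valid σ}, G.payoff (G.combine σ₁ σ₂) k) = G.lowerVal k

/-- `σ[B]`: switch `σ` to the actions prescribed by the partial assignment `β`
(at most one action per state). -/
def switch (σ : Fin G.n → ℕ) (β : Fin G.n → Option ℕ) (k : Fin G.n) : ℕ :=
  (β k).getD (σ k)

/-- `β` represents an improving set `B` for Player 1: it contains at least one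
improving switch for Player 1 and no improving switch for Player 2. -/
def ImprovingSet1 (σ : Fin G.n → ℕ) (β : Fin G.n → Option ℕ) : Prop :=
  (∀ k j, β k = some j → j ∈ G.A k) ∧
  (∃ k j, β k = some j ∧ G.Improving1 σ k j) ∧
  (∀ k j, β k = some j → ¬ G.Improving2 σ k j)

/-- `β` represents an improving set `B` for Player 2. -/
def ImprovingSet2 (σ : Fin G.n → ℕ) (β : Fin G.n → Option ℕ) : Prop :=
  (∀ k j, β k = some j → j ∈ G.A k) ∧
  (∃ k j, β k = some j ∧ G.Improving2 σ k j) ∧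
  (∀ k j, β k = some j → ¬ G.Improving1 σ k j)

end PricedGame

end PTGpaper

namespace PTGpaper

open PricedGame

/-!
Along the path of `(σ₁, σ₂')` from a state of finite payoff, every step strictly decreases the
valuation `ν(·, σ)`. At a Player 1 state the action is that of `σ`, and `ν` satisfies the Bellman
equation `ν(k, σ) = (c_j + u(k', σ), 1 + ℓ(k', σ))`; at a Player 2 state the absence of improving
switches gives `(c_j + u(k', σ), 1 + ℓ(k', σ)) ≤ ν(k, σ)`. Since costs are nonnegative and the
lengths of finite-payoff paths are finite, either inequality forces `ν(k', σ) < ν(k, σ)`. A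
potential taking finitely many values cannot decrease forever, so the path reaches `⊥`.
-/

namespace PricedGame

variable (G : PricedGame)

section Path

variable (σ : Fin G.n → ℕ) {k k' : Fin G.n}

lemma reach_succ_of_dest_eq_some (h : G.dest (σ k) = some k') (t : ℕ) :
    G.reach σ k (t + 1) = G.reach σ k' t := by
  simp [reach, Function.iterate_succ_apply, step, h]

lemma terminates_iff_of_dest_eq_some (h : G.dest (σ k) = some k') :
    G.Terminates σ k ↔ G.Terminates σ k' := by
  constructor
  · rintro ⟨_ | t, ht⟩
    · simp [reach] at ht
    · exact ⟨t, by rwa [← G.reach_succ_of_dest_eq_some σ h]⟩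
  · rintro ⟨t, ht⟩
    exact ⟨t + 1, by rwa [G.reach_succ_of_dest_eq_some σ h]⟩

lemma terminates_of_dest_eq_none (h : G.dest (σ k) = none) : G.Terminates σ k :=
  ⟨1, by simp [reach, step, h]⟩

lemma terminates_of_payoff_ne_top (h : G.payoff σ k ≠ ⊤) : G.Terminates σ k := by
  by_contra hk
  exact h (if_neg hk)

lemma len_ne_top_of_terminates (h : G.Terminates σ k) : G.len σ k ≠ ⊤ := by
  obtain ⟨t, ht⟩ := h
  exact ne_top_of_le_ne_top (ENat.natCast_ne_top t) (iInf₂_le t ht)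

lemma payoff_eq_cost_add (h : G.dest (σ k) = some k') :
    G.payoff σ k = G.cost (σ k) + G.payoff σ k' := by
  by_cases hk : G.Terminates σ k
  · have hk' := (G.terminates_iff_of_dest_eq_some σ h).1 hk
    rw [payoff, if_pos hk, payoff, if_pos hk', tsum_eq_zero_add' ENNReal.summable]
    congr 1
    exact tsum_congr fun t => by rw [G.reach_succ_of_dest_eq_some σ h]
  · have hk' := mt (G.terminates_iff_of_dest_eq_some σ h).2 hk
    rw [payoff, if_neg hk, payoff, if_neg hk', add_top]

lemma len_eq_one_add (h : G.dest (σ k) = some k') : G.len σ k = 1 + G.len σ k' := by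
  refine le_antisymm ?_ (le_iInf₂ fun t ht => ?_)
  · simp only [len, ENat.add_iInf]
    refine le_iInf₂ fun t ht => ?_
    rw [← G.reach_succ_of_dest_eq_some σ h] at ht
    exact (iInf₂_le (t + 1) ht).trans_eq (by push_cast; ring)
  · rcases t with _ | t
    · simp [reach] at ht
    · rw [G.reach_succ_of_dest_eq_some σ h] at ht
      calc 1 + G.len σ k' ≤ 1 + t := by gcongr; exact iInf₂_le t ht
        _ = ↑(t + 1) := by push_cast; ring

lemma valn_eq_cand (h : G.dest (σ k) = some k') : G.valn σ k = G.cand σ (σ k) := by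
  simp [valn, cand, payoffO, lenO, h, G.payoff_eq_cost_add σ h, G.len_eq_one_add σ h]

lemma payoff_ne_top_of_valn_le (hle : G.valn σ k' ≤ G.valn σ k) (hk : G.payoff σ k ≠ ⊤) :
    G.payoff σ k' ≠ ⊤ :=
  ne_top_of_le_ne_top hk (Prod.Lex.monotone_fst _ _ hle)

lemma valn_lt_of_cand_le {j : ℕ} (hj : G.dest j = some k') (hle : G.cand σ j ≤ G.valn σ k)
    (hk : G.payoff σ k ≠ ⊤) : G.valn σ k' < G.valn σ k := by
  rw [cand, valn, payoffO, lenO, hj, Option.elim_some, Option.elim_some, Prod.Lex.le_iff] at hle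
  have hcost : G.payoff σ k' ≤ G.cost j + G.payoff σ k' := le_add_self
  rw [valn, valn, Prod.Lex.lt_iff]
  rcases hle with hlt | ⟨heq, hlen⟩
  · exact Or.inl (hcost.trans_lt hlt)
  rcases (hcost.trans_eq heq).lt_or_eq with hlt | hpeq
  · exact Or.inl hlt
  have hk' : G.len σ k' ≠ ⊤ :=
    G.len_ne_top_of_terminates σ (G.terminates_of_payoff_ne_top σ (hpeq ▸ hk))
  refine Or.inr ⟨hpeq, ?_⟩
  calc G.len σ k' < G.len σ k' + 1 := (ENat.lt_add_one_iff hk').2 le_rfl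
    _ = 1 + G.len σ k' := add_comm _ _
    _ ≤ G.len σ k := hlen

end Path

lemma terminates_of_potential_lt {β : Type*} [Preorder β] (τ : Fin G.n → ℕ)
    (S : Set (Fin G.n)) (v : Fin G.n → β)
    (hv : ∀ k ∈ S, ∀ k', G.dest (τ k) = some k' → k' ∈ S ∧ v k' < v k) :
    ∀ k ∈ S, G.Terminates τ k := by
  have hwf : WellFounded (InvImage (· < ·) v) :=
    (Set.wellFoundedOn_range (f := v)).1 (Set.finite_range v).wellFoundedOn
  intro k
  induction k using hwf.induction with
  | _ k ih =>
    intro hk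
    cases hd : G.dest (τ k) with
    | none => exact G.terminates_of_dest_eq_none τ hd
    | some k' =>
      obtain ⟨hk', hlt⟩ := hv k hk k' hd
      exact (G.terminates_iff_of_dest_eq_some τ hd).2 (ih k' hlt hk')

lemma cand_le_valn_of_not_improving2 {σ₁ σ₂ σ₂' : Fin G.n → ℕ} (hσ₂' : G.Valid σ₂')
    (h2 : ∀ k j, G.owner k = 1 → ¬ G.Improving2 (G.combine σ₁ σ₂) k j)
    {k k' : Fin G.n} (hk' : G.dest (G.combine σ₁ σ₂' k) = some k') :
    G.cand (G.combine σ₁ σ₂) (G.combine σ₁ σ₂' k) ≤ G.valn (G.combine σ₁ σ₂) k := by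
  by_cases h1 : G.owner k = 0
  · have hσ : G.combine σ₁ σ₂' k = G.combine σ₁ σ₂ k := by simp [combine, h1]
    rw [hσ] at hk' ⊢
    exact (G.valn_eq_cand _ hk').ge
  · have h2' : G.owner k = 1 := Fin.eq_one_of_ne_zero _ h1
    have hσ : G.combine σ₁ σ₂' k = σ₂' k := by simp [combine, h1]
    rw [hσ]
    exact not_lt.1 fun hlt => h2 k (σ₂' k) h2' ⟨hσ₂' k, hlt⟩

end PricedGame

theorem deviation_path_terminates_general (G : PricedGame) (σ₁ σ₂ σ₂' : Fin G.n → ℕ)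
    (hσ₂' : G.Valid σ₂')
    (h2 : ∀ k j, G.owner k = 1 → ¬ G.Improving2 (G.combine σ₁ σ₂) k j)
    (k₀ : Fin G.n) (hfin : G.payoff (G.combine σ₁ σ₂) k₀ ≠ ⊤) :
    G.Terminates (G.combine σ₁ σ₂') k₀ := by
  refine G.terminates_of_potential_lt _ {k | G.payoff (G.combine σ₁ σ₂) k ≠ ⊤}
    (G.valn (G.combine σ₁ σ₂)) (fun k hk k' hk' => ?_) k₀ hfin
  have hlt := G.valn_lt_of_cand_le _ hk' (G.cand_le_valn_of_not_improving2 hσ₂' h2 hk') hk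
  exact ⟨G.payoff_ne_top_of_valn_le _ hlt.le hk, hlt⟩

/-- if Player 2 has no improving switches with respect to `σ = (σ₁,σ₂)`
and `u(k₀,σ)` is finite, then no Player 2 deviation `σ₂'` can make the induced path
from `k₀` infinite: the path of `(σ₁,σ₂')` from `k₀` necessarily reaches the terminal
state (otherwise the valuations `ν(·,σ)` would strictly decrease along a cycle,
a contradiction). -/
theorem deviation_path_terminates (G : PricedGame) (σ₁ σ₂ σ₂' : Fin G.n → ℕ)
    (hσ₁ : G.Valid σ₁) (hσ₂ : G.Valid σ₂) (hσ₂' : G.Valid σ₂')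
    (h2 : ∀ k j, G.owner k = 1 → ¬ G.Improving2 (G.combine σ₁ σ₂) k j)
    (k₀ : Fin G.n) (hfin : G.payoff (G.combine σ₁ σ₂) k₀ ≠ ⊤) :
    G.Terminates (G.combine σ₁ σ₂') k₀ :=
  deviation_path_terminates_general G σ₁ σ₂ σ₂' hσ₂' h2 k₀ hfin

end PTGpaper
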